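/- Fix k > 0. On the space W₁ = V₁, the Sobolev inner product φ(f,g) = ∫_{-1}^{1} f'ḡ' dx (the boundary terms vanish since f(±1)=0) and the first left-definite inner product (f,g)₁ := ∫_{-1}^{1} [f'(x)ḡ'(x) + k·f(x)ḡ(x)(1-x²)^{-1}] dx are equivalent: ‖f‖_φ ≤ ‖f‖₁ for all f ∈ W₁, and there exists a constant C > 0 such that ‖f‖₁ ≤ C·‖f‖_φ for all f ∈ W₁. -/

import Mathlib

open MeasureTheory Set

/-- Membership in
`V₁ = {f : (-1,1) → ℂ | f ∈ AC_loc(-1,1), f ∈ L²((-1,1);(1-x²)⁻¹dx), f' ∈ L²(-1,1)}`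
(which coincides with `W₁`), encoded via the derivative function `f'`. -/
def InV1 (f f' : ℝ → ℂ) : Prop :=
  (∀ x ∈ Ioo (-1 : ℝ) 1, ∀ y ∈ Ioo (-1 : ℝ) 1, IntervalIntegrable f' volume x y) ∧
  (∀ x ∈ Ioo (-1 : ℝ) 1, ∀ y ∈ Ioo (-1 : ℝ) 1, f y - f x = ∫ t in x..y, f' t) ∧
  IntegrableOn (fun x => ‖f x‖ ^ 2 * (1 - x ^ 2)⁻¹) (Ioo (-1 : ℝ) 1) ∧
  IntegrableOn (fun x => ‖f' x‖ ^ 2) (Ioo (-1 : ℝ) 1)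

/-!
Since `f' ∈ L¹(-1, 1)`, `f` has limits at `±1`, and both vanish: otherwise `‖f‖² (1 - x²)⁻¹`
would dominate a multiple of `(x ∓ 1)⁻¹`, which is not integrable at `±1`. Hence
`f x = ∫ t in ±1..x, f' t`, and Cauchy–Schwarz gives `‖f x‖² ≤ (1 ∓ x) ‖f'‖₂²`. As
`min (1 - x) (1 + x) ≤ 1 - x²`, this gives `‖f x‖² (1 - x²)⁻¹ ≤ ‖f'‖₂²` pointwise,
so `∫ ‖f‖² (1 - x²)⁻¹ ≤ 2 ‖f'‖₂²` and `C = √(1 + 2k)` works.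
-/

open Filter Topology

theorem LocallyIntegrableOn.integrableOn_of_integrableOn_norm_sq {X E : Type*}
    [TopologicalSpace X] [SecondCountableTopology X] [MeasurableSpace X] [NormedAddCommGroup E]
    {μ : Measure X} {s : Set X} {g : X → E} (hs : μ s ≠ ⊤) (hg : LocallyIntegrableOn g s μ)
    (hg2 : IntegrableOn (fun x => ‖g x‖ ^ 2) s μ) : IntegrableOn g s μ :=
  have : IsFiniteMeasure (μ.restrict s) := isFiniteMeasure_restrict.2 hs
  ((memLp_two_iff_integrable_sq_norm hg.aestronglyMeasurable).2 hg2).integrable one_le_two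

theorem locallyIntegrableOn_Ioo_of_intervalIntegrable {E : Type*} [NormedAddCommGroup E]
    {g : ℝ → E} {a b : ℝ}
    (hg : ∀ x ∈ Ioo a b, ∀ y ∈ Ioo a b, IntervalIntegrable g volume x y) :
    LocallyIntegrableOn g (Ioo a b) := by
  intro x hx
  obtain ⟨y, hay, hyx⟩ := exists_between hx.1
  obtain ⟨z, hxz, hzb⟩ := exists_between hx.2
  refine ⟨Ioo y z, mem_nhdsWithin_of_mem_nhds (Ioo_mem_nhds hyx hxz), ?_⟩
  exact (hg y ⟨hay, hyx.trans hx.2⟩ z ⟨hx.1.trans hxz, hzb⟩).1.mono_set Ioo_subset_Ioc_self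

section

variable {E : Type*} [NormedAddCommGroup E] [NormedSpace ℝ E]

theorem norm_setIntegral_sq_le [CompleteSpace E] {α : Type*} [MeasurableSpace α]
    {μ : Measure α} {s : Set α} {g : α → E} (hs : μ s ≠ ⊤) (hg : IntegrableOn g s μ)
    (hg2 : IntegrableOn (fun x => ‖g x‖ ^ 2) s μ) :
    ‖∫ x in s, g x ∂μ‖ ^ 2 ≤ μ.real s * ∫ x in s, ‖g x‖ ^ 2 ∂μ := by
  rcases eq_or_ne (μ s) 0 with h0 | h0
  · simp [Measure.restrict_eq_zero.2 h0]
  have hpos : 0 < μ.real s := ENNReal.toReal_pos h0 hs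
  have hJensen :=
    ((convexOn_norm convex_univ).pow (fun _ _ => norm_nonneg _) 2).map_set_average_le
      (continuous_norm.pow 2).continuousOn isClosed_univ h0 hs (by simp) hg hg2
  simp only [Pi.pow_apply, setAverage_eq, norm_smul, Real.norm_eq_abs, abs_inv,
    abs_of_pos hpos, smul_eq_mul, mul_pow] at hJensen
  rw [← mul_le_mul_iff_right₀ (pow_pos (inv_pos.2 hpos) 2)]
  calc _ ≤ (μ.real s)⁻¹ * ∫ x in s, ‖g x‖ ^ 2 ∂μ := hJensen
    _ = _ := by field_simp

theorem norm_intervalIntegral_sq_le [CompleteSpace E] {g : ℝ → E} {a b c x : ℝ}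
    (hc : c ∈ Icc a b) (hx : x ∈ Icc a b) (hg : IntegrableOn g (Ioo a b))
    (hg2 : IntegrableOn (fun t => ‖g t‖ ^ 2) (Ioo a b)) :
    ‖∫ t in c..x, g t‖ ^ 2 ≤ |x - c| * ∫ t in Ioo a b, ‖g t‖ ^ 2 := by
  have hsub : uIoc c x ⊆ Icc a b := uIoc_subset_uIcc.trans (uIcc_subset_Icc hc hx)
  rw [← integrableOn_Icc_iff_integrableOn_Ioo] at hg hg2
  rw [intervalIntegral.norm_integral_eq_norm_integral_uIoc]
  calc _ ≤ volume.real (uIoc c x) * ∫ t in uIoc c x, ‖g t‖ ^ 2 :=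
        norm_setIntegral_sq_le (by simp [Real.volume_uIoc]) (hg.mono_set hsub) (hg2.mono_set hsub)
    _ ≤ |x - c| * ∫ t in Ioo a b, ‖g t‖ ^ 2 := by
      rw [measureReal_def, Real.volume_uIoc, ENNReal.toReal_ofReal (abs_nonneg _)]
      refine mul_le_mul_of_nonneg_left ?_ (abs_nonneg _)
      rw [← integral_Icc_eq_integral_Ioo]
      exact setIntegral_mono_set hg2 (.of_forall fun _ => by positivity) hsub.eventuallyLE

theorem tendsto_nhdsWithin_Ioo_of_sub_eq_integral {f f' : ℝ → E} {a b c x₀ : ℝ}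
    (hf' : IntegrableOn f' (Ioo a b))
    (hf : ∀ x ∈ Ioo a b, ∀ y ∈ Ioo a b, f y - f x = ∫ t in x..y, f' t)
    (hx₀ : x₀ ∈ Ioo a b) (hc : c ∈ Icc a b) :
    Tendsto f (𝓝[Ioo a b] c) (𝓝 (f x₀ + ∫ t in x₀..c, f' t)) := by
  have hab : a ≤ b := hx₀.1.le.trans hx₀.2.le
  have hprim : ContinuousOn (fun u => ∫ t in x₀..u, f' t) (Icc a b) := by
    rw [← uIcc_of_le hab]
    refine intervalIntegral.continuousOn_primitive_interval' ?_ ?_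
    · rwa [intervalIntegrable_iff_integrableOn_Ioo_of_le hab]
    · rw [uIcc_of_le hab]; exact Ioo_subset_Icc_self hx₀
  refine (((hprim c hc).mono_left (nhdsWithin_mono _ Ioo_subset_Icc_self)).const_add
    (f x₀)).congr' ?_
  filter_upwards [self_mem_nhdsWithin] with x hx
  rw [← hf x₀ hx₀ x hx, add_sub_cancel]

theorem eq_zero_of_tendsto_of_integrableOn_inv_sub_smul {g : ℝ → E} {a b c : ℝ} {L : E}
    (hab : a < b) (hc : c ∈ Icc a b) (hg : Tendsto g (𝓝[Ioo a b] c) (𝓝 L))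
    (hint : IntegrableOn (fun x => (x - c)⁻¹ • g x) (Ioo a b)) : L = 0 := by
  by_contra hL
  have hL' : 0 < ‖L‖ := norm_pos_iff.2 hL
  obtain ⟨ε, hε, hball⟩ := Metric.mem_nhdsWithin_iff.1
    (hg.norm.eventually (lt_mem_nhds (half_lt_self hL')))
  set a' := max a (c - ε)
  set b' := min b (c + ε)
  have hsub : Ioo a' b' ⊆ Ioo a b := Ioo_subset_Ioo (le_max_left _ _) (min_le_left _ _)
  have hlarge : ∀ x ∈ Ioo a' b', ‖L‖ / 2 < ‖g x‖ := by
    intro x hx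
    refine hball ⟨?_, hsub hx⟩
    rw [Metric.mem_ball, Real.dist_eq, abs_lt]
    constructor <;> linarith [le_max_right a (c - ε), min_le_right b (c + ε), hx.1, hx.2]
  have hinv : IntegrableOn (fun x => (x - c)⁻¹) (Ioo a' b') := by
    refine Integrable.mono' ((hint.mono_set hsub).norm.const_mul (2 / ‖L‖))
      (measurable_id.sub_const c).inv.aestronglyMeasurable ?_
    rw [ae_restrict_iff' measurableSet_Ioo]
    refine .of_forall fun x hx => ?_
    have hratio : 1 ≤ 2 / ‖L‖ * ‖g x‖ := by
      rw [div_mul_eq_mul_div, one_le_div hL']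
      linarith [hlarge x hx]
    rw [norm_smul]
    exact (le_mul_of_one_le_right (norm_nonneg _) hratio).trans_eq (by ring)
  have ha'b' : a' < b' :=
    lt_min (max_lt hab (by linarith [hc.2])) (max_lt (by linarith [hc.1]) (by linarith))
  have hc' : c ∈ uIcc a' b' := by
    rw [uIcc_of_le ha'b'.le]
    exact ⟨max_le hc.1 (by linarith), le_min hc.2 (by linarith)⟩
  have hinv' := (intervalIntegrable_iff_integrableOn_Ioo_of_le ha'b'.le).2 hinv
  rw [intervalIntegrable_sub_inv_iff] at hinv'
  exact hinv'.elim ha'b'.ne (· hc')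

theorem eq_intervalIntegral_of_integrableOn_inv_sub_mul_norm_sq {f f' : ℝ → E} {a b c x : ℝ}
    (hf' : IntegrableOn f' (Ioo a b))
    (hf : ∀ x ∈ Ioo a b, ∀ y ∈ Ioo a b, f y - f x = ∫ t in x..y, f' t)
    (hc : c ∈ Icc a b) (hw : IntegrableOn (fun x => (x - c)⁻¹ * ‖f x‖ ^ 2) (Ioo a b))
    (hx : x ∈ Ioo a b) : f x = ∫ t in c..x, f' t := by
  have hlim := tendsto_nhdsWithin_Ioo_of_sub_eq_integral hf' hf hx hc
  have hzero : ‖f x + ∫ t in x..c, f' t‖ ^ 2 = 0 :=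
    eq_zero_of_tendsto_of_integrableOn_inv_sub_smul (hx.1.trans hx.2) hc (hlim.norm.pow 2) hw
  rw [intervalIntegral.integral_symm, ← sub_eq_add_neg, sq_eq_zero_iff, norm_eq_zero,
    sub_eq_zero] at hzero
  exact hzero

theorem norm_sq_le_abs_sub_mul_integral_norm_sq [CompleteSpace E] {f f' : ℝ → E}
    {a b c x : ℝ}
    (hf' : IntegrableOn f' (Ioo a b))
    (hf'2 : IntegrableOn (fun t => ‖f' t‖ ^ 2) (Ioo a b))
    (hf : ∀ x ∈ Ioo a b, ∀ y ∈ Ioo a b, f y - f x = ∫ t in x..y, f' t)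
    (hc : c ∈ Icc a b) (hw : IntegrableOn (fun x => (x - c)⁻¹ * ‖f x‖ ^ 2) (Ioo a b))
    (hx : x ∈ Ioo a b) : ‖f x‖ ^ 2 ≤ |x - c| * ∫ t in Ioo a b, ‖f' t‖ ^ 2 := by
  rw [eq_intervalIntegral_of_integrableOn_inv_sub_mul_norm_sq hf' hf hc hw hx]
  exact norm_intervalIntegral_sq_le hc (Ioo_subset_Icc_self hx) hf' hf'2

end

namespace InV1

variable {f f' : ℝ → ℂ}

theorem integrableOn_inv_sub_mul (hf : InV1 f f') {c : ℝ} (hc : c ^ 2 = 1) :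
    IntegrableOn (fun x => (x - c)⁻¹ * ‖f x‖ ^ 2) (Ioo (-1) 1) := by
  -- `(x - c)⁻¹ = -(x + c) * (1 - x²)⁻¹` because `(x - c) (x + c) = x² - 1`
  have hbdd := hf.2.2.1.bdd_mul (c := 2) (f := fun x => -(x + c))
    (by fun_prop : Continuous fun x : ℝ => -(x + c)).aestronglyMeasurable ?_
  · refine hbdd.congr ((ae_restrict_iff' measurableSet_Ioo).2 (.of_forall fun x hx => ?_))
    have hx2 : 1 - x ^ 2 ≠ 0 := by nlinarith [hx.1, hx.2]
    have hxc : x - c ≠ 0 := by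
      rw [sub_ne_zero]; rintro rfl; exact hx2 (by rw [hc]; ring)
    field_simp
    linear_combination (‖f x‖ ^ 2) * hc
  · rw [ae_restrict_iff' measurableSet_Ioo]
    refine .of_forall fun x hx => ?_
    have : |c| = 1 := by rw [← sq_eq_sq₀ (abs_nonneg c) zero_le_one, sq_abs, hc, one_pow]
    rw [Real.norm_eq_abs, abs_neg]
    exact (abs_add_le _ _).trans (by linarith [abs_lt.2 ⟨hx.1, hx.2⟩])

theorem integrableOn_deriv (hf : InV1 f f') : IntegrableOn f' (Ioo (-1) 1) :=
  LocallyIntegrableOn.integrableOn_of_integrableOn_norm_sq (by simp)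
    (locallyIntegrableOn_Ioo_of_intervalIntegrable hf.1) hf.2.2.2

theorem norm_sq_mul_inv_le (hf : InV1 f f') {x : ℝ} (hx : x ∈ Ioo (-1) 1) :
    ‖f x‖ ^ 2 * (1 - x ^ 2)⁻¹ ≤ ∫ t in Ioo (-1 : ℝ) 1, ‖f' t‖ ^ 2 := by
  have hnear_one := norm_sq_le_abs_sub_mul_integral_norm_sq hf.integrableOn_deriv hf.2.2.2
    hf.2.1 (by norm_num) (hf.integrableOn_inv_sub_mul (c := 1) (by norm_num)) hx
  have hnear_neg_one := norm_sq_le_abs_sub_mul_integral_norm_sq hf.integrableOn_deriv hf.2.2.2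
    hf.2.1 (by norm_num) (hf.integrableOn_inv_sub_mul (c := -1) (by norm_num)) hx
  have hA : 0 ≤ ∫ t in Ioo (-1 : ℝ) 1, ‖f' t‖ ^ 2 :=
    setIntegral_nonneg measurableSet_Ioo fun _ _ => by positivity
  rw [abs_of_neg (by linarith [hx.2])] at hnear_one
  rw [abs_of_pos (by linarith [hx.1])] at hnear_neg_one
  rw [mul_inv_le_iff₀ (by nlinarith [hx.1, hx.2])]
  rcases le_total x 0 with h | h <;> nlinarith [hx.1, hx.2]

theorem integral_norm_sq_mul_inv_le (hf : InV1 f f') :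
    ∫ x in Ioo (-1 : ℝ) 1, ‖f x‖ ^ 2 * (1 - x ^ 2)⁻¹ ≤
      2 * ∫ t in Ioo (-1 : ℝ) 1, ‖f' t‖ ^ 2 := by
  refine (setIntegral_mono_on hf.2.2.1 (integrableOn_const (by simp)) measurableSet_Ioo
    fun x hx => hf.norm_sq_mul_inv_le hx).trans_eq ?_
  rw [setIntegral_const, Real.volume_real_Ioo_of_le (by norm_num), smul_eq_mul]
  norm_num

theorem integral_leftDefinite_eq (hf : InV1 f f') (k : ℝ) :
    ∫ x in Ioo (-1 : ℝ) 1, (‖f' x‖ ^ 2 + k * ‖f x‖ ^ 2 * (1 - x ^ 2)⁻¹) =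
      (∫ x in Ioo (-1 : ℝ) 1, ‖f' x‖ ^ 2) +
        k * ∫ x in Ioo (-1 : ℝ) 1, ‖f x‖ ^ 2 * (1 - x ^ 2)⁻¹ := by
  simp_rw [mul_assoc k]
  rw [integral_add hf.2.2.2 (hf.2.2.1.const_mul k), integral_const_mul]

end InV1

/-- On `W₁ = V₁` the Sobolev norm `‖f‖_φ = (∫|f'|²)^{1/2}` and the first left-definite
norm `‖f‖₁ = (∫ [|f'|² + k|f|²(1-x²)⁻¹])^{1/2}` are equivalent: `‖f‖_φ ≤ ‖f‖₁`
always, and there is a constant `C > 0` with `‖f‖₁ ≤ C‖f‖_φ` for all `f ∈ W₁`. -/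
theorem sobolev_left_definite_norms_equivalent (k : ℝ) (hk : 0 < k) :
    (∀ f f' : ℝ → ℂ, InV1 f f' →
      Real.sqrt (∫ x in Ioo (-1 : ℝ) 1, ‖f' x‖ ^ 2) ≤
        Real.sqrt (∫ x in Ioo (-1 : ℝ) 1,
          (‖f' x‖ ^ 2 + k * ‖f x‖ ^ 2 * (1 - x ^ 2)⁻¹))) ∧
    ∃ C : ℝ, 0 < C ∧ ∀ f f' : ℝ → ℂ, InV1 f f' →
      Real.sqrt (∫ x in Ioo (-1 : ℝ) 1,
          (‖f' x‖ ^ 2 + k * ‖f x‖ ^ 2 * (1 - x ^ 2)⁻¹)) ≤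
        C * Real.sqrt (∫ x in Ioo (-1 : ℝ) 1, ‖f' x‖ ^ 2) := by
  refine ⟨fun f f' hf => ?_, ⟨√(1 + 2 * k), by positivity, fun f f' hf => ?_⟩⟩
  · rw [hf.integral_leftDefinite_eq]
    refine Real.sqrt_le_sqrt (le_add_of_nonneg_right (mul_nonneg hk.le ?_))
    exact setIntegral_nonneg measurableSet_Ioo fun x hx => by
      have : 0 < 1 - x ^ 2 := by nlinarith [hx.1, hx.2]
      positivity
  · rw [hf.integral_leftDefinite_eq, ← Real.sqrt_mul (by positivity)]
    exact Real.sqrt_le_sqrt (by nlinarith [hf.integral_norm_sq_mul_inv_le])
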